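/- Let τ ∈ (−1/2, 0), so q = exp(2πiτ) has |q| = 1 and q ≠ ±1, and let λ ∈ ℂ. Define the operators (X⁺_λ f)(z) = q^{z}·( q^{−1/2−iλ}f(z−1) − q^{1/2+iλ}f(z+1) )/(q^{−1}−q) and (X⁻_λ f)(z) = q^{−z}·( q^{−1/2−iλ}f(z+1) − q^{1/2+iλ}f(z−1) )/(q^{−1}−q). Suppose f and g are meromorphic on ℂ with growth rates ε_f and ε_g at ±i∞ respectively, that ε_f + ε_g < 2πτ, and that f and g are analytic on the strip {z ∈ ℂ : |Re(z)| ≤ 1}. Then all the integrals below over the imaginary axis converge absolutely and ∫_{−i∞}^{i∞} (X⁺_λ f)(z)·g(z) dz = −∫_{−i∞}^{i∞} f(z)·(X⁺_{−λ} g)(z) dz, ∫_{−i∞}^{i∞} (X⁻_λ f)(z)·g(z) dz = −∫_{−i∞}^{i∞} f(z)·(X⁻_{−λ} g)(z) dz, and ∫_{−i∞}^{i∞} f(z+1)·g(z) dz = ∫_{−i∞}^{i∞} f(z)·g(z−1) dz. -/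

import Mathlib

/-!
Every integral in the statement is a pairing `∫_{iℝ} F(z + 1) G(z) dz` or
`∫_{iℝ} F(z) G(z - 1) dz`, with `F, G` among `f, g, q^z f, q^z g`. These are the integrals of
`F(z) G(z - 1)` over the lines `Re z = 1` and `Re z = 0`. Since `|q^z| = exp(-2πt Im z)` and
`ε_f + ε_g < 2πt`, that function decays exponentially in the strip `0 ≤ Re z ≤ 1`, where it is
holomorphic, so Cauchy's theorem on the rectangles `[0, 1] × [-T, T]`, `T → ∞`, makes the two
integrals equal. The coefficients of `X⁺_λ` and `X⁺_{-λ}` then match because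
`q^{-1/2 - iλ} q = q^{1/2 - iλ}`, and `X⁻` reduces to `X⁺` under the reflection `z ↦ -z`, which
preserves the imaginary axis.
-/

noncomputable section

open Complex MeasureTheory

/-- `q^u = exp(2πiτu)`. -/
def qpow (τ u : ℂ) : ℂ := Complex.exp (2 * (Real.pi : ℂ) * Complex.I * τ * u)

/-- `(X⁺_λ f)(z) = q^z·(q^{−1/2−iλ}f(z−1) − q^{1/2+iλ}f(z+1))/(q^{−1}−q)`. -/
def Xplus (τ lam : ℂ) (f : ℂ → ℂ) (z : ℂ) : ℂ :=
  qpow τ z * (qpow τ (-(1 / 2) - Complex.I * lam) * f (z - 1) -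
      qpow τ (1 / 2 + Complex.I * lam) * f (z + 1)) / (qpow τ (-1) - qpow τ 1)

/-- `(X⁻_λ f)(z) = q^{−z}·(q^{−1/2−iλ}f(z+1) − q^{1/2+iλ}f(z−1))/(q^{−1}−q)`. -/
def Xminus (τ lam : ℂ) (f : ℂ → ℂ) (z : ℂ) : ℂ :=
  qpow τ (-z) * (qpow τ (-(1 / 2) - Complex.I * lam) * f (z + 1) -
      qpow τ (1 / 2 + Complex.I * lam) * f (z - 1)) / (qpow τ (-1) - qpow τ 1)

/-- A meromorphic function `f` has (exponential) growth rate `ε` at `±i∞`: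
its singularities lie in a horizontal band `{Im z ∈ K}`, `K` compact, and
`|f(x+iy)| = O(exp(ε|y|))` as `y → ±∞`, uniformly for `x` in compacts of `ℝ`. -/
def HasGrowthRate (f : ℂ → ℂ) (ε : ℝ) : Prop :=
  (∃ K : Set ℝ, IsCompact K ∧ ∀ z : ℂ, z.im ∉ K → AnalyticAt ℂ f z) ∧
  ∀ A : Set ℝ, IsCompact A → ∃ C M : ℝ, ∀ z : ℂ, z.re ∈ A → M ≤ |z.im| →
    ‖f z‖ ≤ C * Real.exp (ε * |z.im|)

open Set Filter Topology Asymptotics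
open scoped Interval Real

def GrowthOn (f : ℂ → ℂ) (A : Set ℝ) (ε : ℝ) : Prop :=
  ∃ C M : ℝ, ∀ z : ℂ, z.re ∈ A → M ≤ |z.im| → ‖f z‖ ≤ C * Real.exp (ε * |z.im|)

lemma integrable_exp_mul_abs {ε : ℝ} (hε : ε < 0) :
    Integrable fun y : ℝ => Real.exp (ε * |y|) := by
  rw [← integrableOn_univ, ← Iic_union_Ioi (a := 0)]
  refine IntegrableOn.union ?_ ?_
  · refine (integrableOn_exp_mul_Iic (neg_pos.2 hε) 0).congr_fun (fun y hy => ?_)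
      measurableSet_Iic
    dsimp only
    rw [abs_of_nonpos hy, neg_mul, mul_neg]
  · exact (integrableOn_exp_mul_Ioi hε 0).congr_fun (fun y hy => by rw [abs_of_pos hy])
      measurableSet_Ioi

namespace GrowthOn

variable {f g : ℂ → ℂ} {A B : Set ℝ} {a b ε ε' : ℝ}

lemma mono (hf : GrowthOn f A ε) (hBA : B ⊆ A) : GrowthOn f B ε := by
  obtain ⟨C, M, hCM⟩ := hf
  exact ⟨C, M, fun z hz => hCM z (hBA hz)⟩

lemma mul (hf : GrowthOn f A ε) (hg : GrowthOn g A ε') :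
    GrowthOn (fun z => f z * g z) A (ε + ε') := by
  obtain ⟨C, M, hf⟩ := hf
  obtain ⟨C', M', hg⟩ := hg
  refine ⟨C * C', max M M', fun z hz hM => ?_⟩
  have hfz := hf z hz (le_of_max_le_left hM)
  have hgz := hg z hz (le_of_max_le_right hM)
  calc ‖f z * g z‖ = ‖f z‖ * ‖g z‖ := norm_mul _ _
    _ ≤ (C * Real.exp (ε * |z.im|)) * (C' * Real.exp (ε' * |z.im|)) :=
        mul_le_mul hfz hgz (norm_nonneg _) ((norm_nonneg _).trans hfz)
    _ = C * C' * Real.exp ((ε + ε') * |z.im|) := by rw [add_mul, Real.exp_add]; ring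

lemma comp_sub_ofReal (hf : GrowthOn f A ε) (u : ℝ) (hBA : ∀ x ∈ B, x - u ∈ A) :
    GrowthOn (fun z => f (z - u)) B ε := by
  obtain ⟨C, M, hCM⟩ := hf
  exact ⟨C, M, fun z hz hM => by
    simpa using hCM (z - u) (by simpa using hBA _ hz) (by simpa using hM)⟩

lemma comp_neg (hf : GrowthOn f A ε) (hBA : ∀ x ∈ B, -x ∈ A) :
    GrowthOn (fun z => f (-z)) B ε := by
  obtain ⟨C, M, hCM⟩ := hf
  exact ⟨C, M, fun z hz hM => by
    simpa using hCM (-z) (by simpa using hBA _ hz) (by simpa using hM)⟩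

lemma integrable_vertical (hf : GrowthOn f A ε) (hε : ε < 0) {x : ℝ} (hx : x ∈ A)
    (hc : ∀ y : ℝ, ContinuousAt f (x + y * I)) :
    Integrable fun y : ℝ => f (x + y * I) := by
  obtain ⟨C, M, hCM⟩ := hf
  have hline : Continuous fun y : ℝ => f (x + y * I) := continuous_iff_continuousAt.2 fun y =>
    ContinuousAt.comp (g := f) (hc y) (by fun_prop)
  refine hline.locallyIntegrable.integrable_of_isBigO_cocompact ?_
    ((integrable_exp_mul_abs hε).integrableAtFilter _)
  refine IsBigO.of_bound C ?_
  filter_upwards [(tendsto_norm_cocompact_atTop (E := ℝ)).eventually_ge_atTop M] with y hy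
  simpa [abs_of_pos (Real.exp_pos _)] using
    hCM (x + y * I) (by simpa using hx) (by simpa using hy)

lemma tendsto_integral_horizontal (hf : GrowthOn f [[a, b]] ε) (hε : ε < 0) :
    Tendsto (fun T : ℝ => ∫ u in a..b, f (u + T * I)) (cocompact ℝ) (𝓝 0) := by
  obtain ⟨C, M, hCM⟩ := hf
  have hnorm := tendsto_norm_cocompact_atTop (E := ℝ)
  have hexp : Tendsto (fun T : ℝ => C * Real.exp (ε * ‖T‖) * |b - a|) (cocompact ℝ) (𝓝 0) := by
    simpa using
      ((Real.tendsto_exp_atBot.comp (hnorm.const_mul_atTop_of_neg hε)).const_mul C).mul_const _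
  refine squeeze_zero_norm' ?_ hexp
  filter_upwards [hnorm.eventually_ge_atTop M] with T hT
  refine intervalIntegral.norm_integral_le_of_norm_le_const fun u hu => ?_
  simpa using hCM (u + T * I) (by simpa using uIoc_subset_uIcc hu) (by simpa using hT)

lemma integral_vertical_eq (hf : GrowthOn f [[a, b]] ε) (hε : ε < 0)
    (hd : ∀ z : ℂ, z.re ∈ [[a, b]] → DifferentiableAt ℂ f z) :
    ∫ y : ℝ, f (a + y * I) = ∫ y : ℝ, f (b + y * I) := by
  have hvert : ∀ x ∈ [[a, b]], Tendsto (fun T : ℝ => ∫ y in -T..T, f (x + y * I)) atTop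
      (𝓝 (∫ y : ℝ, f (x + y * I))) := fun x hx =>
    intervalIntegral_tendsto_integral
      (hf.integrable_vertical hε hx fun y => (hd _ (by simpa using hx)).continuousAt)
      tendsto_neg_atTop_atBot tendsto_id
  set H : ℝ → ℂ := fun T => ∫ u in a..b, f (u + T * I)
  have hrect : ∀ T : ℝ, (∫ y in -T..T, f (a + y * I)) - (∫ y in -T..T, f (b + y * I)) =
      -I * (H (-T) - H T) := by
    intro T
    have := integral_boundary_rect_eq_zero_of_differentiableOn f ⟨a, -T⟩ ⟨b, T⟩
      fun z hz => (hd z (by simpa using hz.1)).differentiableWithinAt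
    simp only [smul_eq_mul] at this
    linear_combination I * this +
      ((∫ y in -T..T, f (a + y * I)) - ∫ y in -T..T, f (b + y * I)) * I_sq
  have hH : Tendsto (fun T : ℝ => -I * (H (-T) - H T)) atTop (𝓝 (-I * (0 - 0))) := by
    have hhor := hf.tendsto_integral_horizontal hε
    exact ((hhor.comp (tendsto_neg_atTop_atBot.mono_right atBot_le_cocompact)).sub
      (hhor.comp (tendsto_id.mono_right atTop_le_cocompact))).const_mul _
  rw [← sub_eq_zero]
  refine tendsto_nhds_unique ((hvert a left_mem_uIcc).sub (hvert b right_mem_uIcc)) ?_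
  simpa [hrect] using hH

end GrowthOn

theorem integral_mul_shift_eq {F G : ℂ → ℂ} {εF εG : ℝ} (hF : GrowthOn F [[0, 1]] εF)
    (hG : GrowthOn G [[-1, 0]] εG) (hε : εF + εG < 0)
    (hFd : ∀ z : ℂ, z.re ∈ [[0, 1]] → DifferentiableAt ℂ F z)
    (hGd : ∀ z : ℂ, z.re ∈ [[-1, 0]] → DifferentiableAt ℂ G z) :
    Integrable (fun y : ℝ => F (I * y + 1) * G (I * y)) ∧
    Integrable (fun y : ℝ => F (I * y) * G (I * y - 1)) ∧
    ∫ y : ℝ, F (I * y + 1) * G (I * y) = ∫ y : ℝ, F (I * y) * G (I * y - 1) := by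
  have hshift : ∀ x ∈ [[(0 : ℝ), 1]], x - 1 ∈ [[(-1 : ℝ), 0]] := fun x hx => by
    rw [uIcc_of_le zero_le_one] at hx
    rw [uIcc_of_le (by norm_num)]
    exact ⟨by linarith [hx.1], by linarith [hx.2]⟩
  have hgrowth : GrowthOn (fun z => F z * G (z - 1)) [[0, 1]] (εF + εG) := by
    simpa using hF.mul (hG.comp_sub_ofReal 1 hshift)
  have hd : ∀ z : ℂ, z.re ∈ [[(0 : ℝ), 1]] → DifferentiableAt ℂ (fun z => F z * G (z - 1)) z :=
    fun z hz => (hFd z hz).mul <|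
      (hGd (z - 1) (by simpa using hshift _ hz)).comp z (differentiableAt_id.sub_const 1)
  have hline : ∀ x ∈ [[(0 : ℝ), 1]],
      Integrable fun y : ℝ => F (x + y * I) * G (x + y * I - 1) := fun x hx =>
    hgrowth.integrable_vertical hε hx fun y => (hd _ (by simpa using hx)).continuousAt
  have h₀ := hline 0 left_mem_uIcc
  have h₁ := hline 1 right_mem_uIcc
  have heq := hgrowth.integral_vertical_eq hε hd
  simp only [ofReal_zero, ofReal_one, zero_add, add_sub_cancel_left] at h₀ h₁ heq
  simp only [mul_comm I, add_comm _ (1 : ℂ)]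
  exact ⟨h₁, h₀, heq.symm⟩

lemma qpow_add (τ a b : ℂ) : qpow τ (a + b) = qpow τ a * qpow τ b := by
  simp only [qpow, mul_add, Complex.exp_add]

lemma differentiable_qpow (τ : ℂ) : Differentiable ℂ (qpow τ) := by
  unfold qpow
  fun_prop

lemma norm_qpow_ofReal_le (t : ℝ) (z : ℂ) : ‖qpow t z‖ ≤ Real.exp (2 * π * |t| * |z.im|) := by
  have hre : (2 * (π : ℂ) * I * t * z).re = -(2 * π * t * z.im) := by
    simp [mul_re, mul_im]
  rw [qpow, Complex.norm_exp, hre, Real.exp_le_exp]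
  calc -(2 * π * t * z.im) ≤ |2 * π * t * z.im| := neg_le_abs _
    _ = 2 * π * |t| * |z.im| := by simp [abs_mul, abs_of_pos Real.pi_pos]

lemma growthOn_qpow (t : ℝ) (A : Set ℝ) : GrowthOn (qpow t) A (2 * π * |t|) :=
  ⟨1, 0, fun z _ _ => by simpa using norm_qpow_ofReal_le t z⟩

def xplusCoeff (τ lam : ℂ) : ℂ := qpow τ (-(1 / 2) - I * lam) / (qpow τ (-1) - qpow τ 1)

lemma Xplus_mul_eq (τ lam : ℂ) (f g : ℂ → ℂ) (z : ℂ) :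
    Xplus τ lam f z * g z = xplusCoeff τ lam * (qpow τ z * g z * f (z - 1)) -
      xplusCoeff τ (-lam) * (qpow τ (z + 1) * f (z + 1) * g z) := by
  have hq : qpow τ (1 / 2 + I * lam) * qpow τ z =
      qpow τ (-(1 / 2) - I * -lam) * qpow τ (z + 1) := by
    rw [← qpow_add, ← qpow_add]; ring_nf
  simp only [Xplus, xplusCoeff]
  linear_combination (-(f (z + 1) * g z) / (qpow τ (-1) - qpow τ 1)) * hq

lemma Xminus_eq_Xplus_comp_neg (τ lam : ℂ) (f : ℂ → ℂ) (z : ℂ) :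
    Xminus τ lam f z = Xplus τ lam (fun w => f (-w)) (-z) := by
  simp only [Xminus, Xplus, neg_sub', neg_neg, neg_add', sub_neg_eq_add]

section Pairing

variable {f g : ℂ → ℂ} {εf εg : ℝ}

theorem integral_Xplus_mul_eq_neg (t : ℝ) (lam : ℂ) (hf : GrowthOn f [[-1, 1]] εf)
    (hg : GrowthOn g [[-1, 1]] εg) (hε : εf + εg + 2 * π * |t| < 0)
    (hfd : ∀ z : ℂ, z.re ∈ [[-1, 1]] → DifferentiableAt ℂ f z)
    (hgd : ∀ z : ℂ, z.re ∈ [[-1, 1]] → DifferentiableAt ℂ g z) :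
    Integrable (fun y : ℝ => Xplus t lam f (I * y) * g (I * y)) ∧
    Integrable (fun y : ℝ => f (I * y) * Xplus t (-lam) g (I * y)) ∧
    ∫ y : ℝ, Xplus t lam f (I * y) * g (I * y) =
      -∫ y : ℝ, f (I * y) * Xplus t (-lam) g (I * y) := by
  have hsub₀ : [[(0 : ℝ), 1]] ⊆ [[-1, 1]] := uIcc_subset_uIcc (by simp) (by simp)
  have hsub₁ : [[(-1 : ℝ), 0]] ⊆ [[-1, 1]] := uIcc_subset_uIcc (by simp) (by simp)
  obtain ⟨hP, hQ, hPQ⟩ := integral_mul_shift_eq (F := fun z => qpow t z * f z)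
    ((growthOn_qpow t _).mul (hf.mono hsub₀)) (hg.mono hsub₁) (by linarith)
    (fun z hz => (differentiable_qpow t z).mul (hfd z (hsub₀ hz))) fun z hz => hgd z (hsub₁ hz)
  obtain ⟨hP', hQ', hPQ'⟩ := integral_mul_shift_eq (F := fun z => qpow t z * g z)
    ((growthOn_qpow t _).mul (hg.mono hsub₀)) (hf.mono hsub₁) (by linarith)
    (fun z hz => (differentiable_qpow t z).mul (hgd z (hsub₀ hz))) fun z hz => hfd z (hsub₁ hz)
  have hL : (fun y : ℝ => Xplus t lam f (I * y) * g (I * y)) = fun y : ℝ =>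
      xplusCoeff t lam * (qpow t (I * y) * g (I * y) * f (I * y - 1)) -
        xplusCoeff t (-lam) * (qpow t (I * y + 1) * f (I * y + 1) * g (I * y)) :=
    funext fun y => Xplus_mul_eq t lam f g (I * y)
  have hR : (fun y : ℝ => f (I * y) * Xplus t (-lam) g (I * y)) = fun y : ℝ =>
      xplusCoeff t (-lam) * (qpow t (I * y) * f (I * y) * g (I * y - 1)) -
        xplusCoeff t lam * (qpow t (I * y + 1) * g (I * y + 1) * f (I * y)) :=
    funext fun y => by rw [mul_comm, Xplus_mul_eq, neg_neg]
  rw [hL, hR]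
  refine ⟨(hQ'.const_mul _).sub (hP.const_mul _), (hQ.const_mul _).sub (hP'.const_mul _), ?_⟩
  rw [integral_sub (hQ'.const_mul _) (hP.const_mul _),
    integral_sub (hQ.const_mul _) (hP'.const_mul _), integral_const_mul, integral_const_mul,
    integral_const_mul, integral_const_mul, ← hPQ, ← hPQ']
  ring

theorem integral_Xminus_mul_eq_neg (t : ℝ) (lam : ℂ) (hf : GrowthOn f [[-1, 1]] εf)
    (hg : GrowthOn g [[-1, 1]] εg) (hε : εf + εg + 2 * π * |t| < 0)
    (hfd : ∀ z : ℂ, z.re ∈ [[-1, 1]] → DifferentiableAt ℂ f z)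
    (hgd : ∀ z : ℂ, z.re ∈ [[-1, 1]] → DifferentiableAt ℂ g z) :
    Integrable (fun y : ℝ => Xminus t lam f (I * y) * g (I * y)) ∧
    Integrable (fun y : ℝ => f (I * y) * Xminus t (-lam) g (I * y)) ∧
    ∫ y : ℝ, Xminus t lam f (I * y) * g (I * y) =
      -∫ y : ℝ, f (I * y) * Xminus t (-lam) g (I * y) := by
  have hneg : ∀ x ∈ [[(-1 : ℝ), 1]], -x ∈ [[(-1 : ℝ), 1]] := fun x hx => by
    rw [uIcc_of_le (by norm_num)] at hx ⊢
    exact ⟨by linarith [hx.2], by linarith [hx.1]⟩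
  have hdneg : ∀ h : ℂ → ℂ, (∀ z : ℂ, z.re ∈ [[-1, 1]] → DifferentiableAt ℂ h z) →
      ∀ z : ℂ, z.re ∈ [[-1, 1]] → DifferentiableAt ℂ (fun w => h (-w)) z :=
    fun h hd z hz => (hd (-z) (by simpa using hneg _ hz)).comp z differentiableAt_id.neg
  obtain ⟨hL, hR, hLR⟩ := integral_Xplus_mul_eq_neg t lam (hf.comp_neg hneg) (hg.comp_neg hneg)
    hε (hdneg f hfd) (hdneg g hgd)
  have hL' : (fun y : ℝ => Xminus t lam f (I * y) * g (I * y)) = fun y : ℝ =>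
      (fun y : ℝ => Xplus t lam (fun w => f (-w)) (I * y) * g (-(I * y))) (-y) :=
    funext fun y => by simp only [Xminus_eq_Xplus_comp_neg, ofReal_neg, mul_neg, neg_neg]
  have hR' : (fun y : ℝ => f (I * y) * Xminus t (-lam) g (I * y)) = fun y : ℝ =>
      (fun y : ℝ => f (-(I * y)) * Xplus t (-lam) (fun w => g (-w)) (I * y)) (-y) :=
    funext fun y => by simp only [Xminus_eq_Xplus_comp_neg, ofReal_neg, mul_neg, neg_neg]
  rw [hL', hR']
  exact ⟨hL.comp_neg, hR.comp_neg, (integral_neg_eq_self _ _).trans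
    (hLR.trans (congrArg Neg.neg (integral_neg_eq_self _ _).symm))⟩

end Pairing

theorem bilinear_pairing_q_modulus_one_general (t : ℝ) (ht2 : t < 0)
    (τ : ℂ) (hτ : τ = (t : ℂ)) (lam : ℂ) (f g : ℂ → ℂ) (εf εg : ℝ)
    (hf : HasGrowthRate f εf) (hg : HasGrowthRate g εg)
    (hεsum : εf + εg < 2 * Real.pi * t)
    (hfa : ∀ z : ℂ, |z.re| ≤ 1 → AnalyticAt ℂ f z)
    (hga : ∀ z : ℂ, |z.re| ≤ 1 → AnalyticAt ℂ g z) :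
    Integrable (fun y : ℝ => Xplus τ lam f (Complex.I * y) * g (Complex.I * y)) ∧
    Integrable (fun y : ℝ => f (Complex.I * y) * Xplus τ (-lam) g (Complex.I * y)) ∧
    Integrable (fun y : ℝ => Xminus τ lam f (Complex.I * y) * g (Complex.I * y)) ∧
    Integrable (fun y : ℝ => f (Complex.I * y) * Xminus τ (-lam) g (Complex.I * y)) ∧
    Integrable (fun y : ℝ => f (Complex.I * y + 1) * g (Complex.I * y)) ∧
    Integrable (fun y : ℝ => f (Complex.I * y) * g (Complex.I * y - 1)) ∧
    (∫ y : ℝ, Xplus τ lam f (Complex.I * y) * g (Complex.I * y)) =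
      -∫ y : ℝ, f (Complex.I * y) * Xplus τ (-lam) g (Complex.I * y) ∧
    (∫ y : ℝ, Xminus τ lam f (Complex.I * y) * g (Complex.I * y)) =
      -∫ y : ℝ, f (Complex.I * y) * Xminus τ (-lam) g (Complex.I * y) ∧
    (∫ y : ℝ, f (Complex.I * y + 1) * g (Complex.I * y)) =
      ∫ y : ℝ, f (Complex.I * y) * g (Complex.I * y - 1) := by
  subst hτ
  have hstrip : ∀ z : ℂ, z.re ∈ [[(-1 : ℝ), 1]] → |z.re| ≤ 1 := fun z hz => by
    rw [uIcc_of_le (by norm_num)] at hz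
    exact abs_le.2 hz
  have hfd := fun z hz => (hfa z (hstrip z hz)).differentiableAt
  have hgd := fun z hz => (hga z (hstrip z hz)).differentiableAt
  have hf' : GrowthOn f [[-1, 1]] εf := hf.2 _ isCompact_uIcc
  have hg' : GrowthOn g [[-1, 1]] εg := hg.2 _ isCompact_uIcc
  have hε : εf + εg + 2 * π * |t| < 0 := by rw [abs_of_neg ht2]; linarith
  obtain ⟨i₁, i₂, e₁⟩ := integral_Xplus_mul_eq_neg t lam hf' hg' hε hfd hgd
  obtain ⟨i₃, i₄, e₂⟩ := integral_Xminus_mul_eq_neg t lam hf' hg' hε hfd hgd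
  have hsub₀ : [[(0 : ℝ), 1]] ⊆ [[-1, 1]] := uIcc_subset_uIcc (by simp) (by simp)
  have hsub₁ : [[(-1 : ℝ), 0]] ⊆ [[-1, 1]] := uIcc_subset_uIcc (by simp) (by simp)
  obtain ⟨i₅, i₆, e₃⟩ := integral_mul_shift_eq (hf'.mono hsub₀) (hg'.mono hsub₁)
    (by nlinarith [Real.pi_pos]) (fun z hz => hfd z (hsub₀ hz)) (fun z hz => hgd z (hsub₁ hz))
  exact ⟨i₁, i₂, i₃, i₄, i₅, i₆, e₁, e₂, e₃⟩

/-- The bilinear pairing over the imaginary axis for the principal series of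
`U_q(sl(2,ℝ))` with `|q| = 1`: all the integrals converge absolutely, and
`∫(X^±_λ f)·g = −∫f·(X^±_{−λ}g)` and `∫f(z+1)g(z)dz = ∫f(z)g(z−1)dz`. -/
theorem bilinear_pairing_q_modulus_one (t : ℝ) (ht1 : -(1 / 2 : ℝ) < t) (ht2 : t < 0)
    (τ : ℂ) (hτ : τ = (t : ℂ)) (lam : ℂ) (f g : ℂ → ℂ) (εf εg : ℝ)
    (hf : HasGrowthRate f εf) (hg : HasGrowthRate g εg)
    (hεsum : εf + εg < 2 * Real.pi * t)
    (hfa : ∀ z : ℂ, |z.re| ≤ 1 → AnalyticAt ℂ f z)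
    (hga : ∀ z : ℂ, |z.re| ≤ 1 → AnalyticAt ℂ g z) :
    Integrable (fun y : ℝ => Xplus τ lam f (Complex.I * y) * g (Complex.I * y)) ∧
    Integrable (fun y : ℝ => f (Complex.I * y) * Xplus τ (-lam) g (Complex.I * y)) ∧
    Integrable (fun y : ℝ => Xminus τ lam f (Complex.I * y) * g (Complex.I * y)) ∧
    Integrable (fun y : ℝ => f (Complex.I * y) * Xminus τ (-lam) g (Complex.I * y)) ∧
    Integrable (fun y : ℝ => f (Complex.I * y + 1) * g (Complex.I * y)) ∧
    Integrable (fun y : ℝ => f (Complex.I * y) * g (Complex.I * y - 1)) ∧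
    (∫ y : ℝ, Xplus τ lam f (Complex.I * y) * g (Complex.I * y)) =
      -∫ y : ℝ, f (Complex.I * y) * Xplus τ (-lam) g (Complex.I * y) ∧
    (∫ y : ℝ, Xminus τ lam f (Complex.I * y) * g (Complex.I * y)) =
      -∫ y : ℝ, f (Complex.I * y) * Xminus τ (-lam) g (Complex.I * y) ∧
    (∫ y : ℝ, f (Complex.I * y + 1) * g (Complex.I * y)) =
      ∫ y : ℝ, f (Complex.I * y) * g (Complex.I * y - 1) :=
  bilinear_pairing_q_modulus_one_general t ht2 τ hτ lam f g εf εg hf hg hεsum hfa hga
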